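/- Let X₁, X₂ ∈ ℝ^{m×n}, K a positive integer, α_k = k/K for k = 0,…,K, X(α) = α X₁ + (1−α) X₂, and G(α) = X(α) X(α)ᵀ. Then for every k = 0,…,K−1, every α ∈ [α_k, α_{k+1}], and every i = 1,…,m, the ordered eigenvalues satisfy |λ_i(G(α)) − λ_i(G(α_k))| ≤ (2/K)(σ_1(X₁) + σ_1(X₂))². -/

import Mathlib

open Matrix

/-- `i`-th largest (0-indexed) eigenvalue of a Hermitian real matrix. -/
noncomputable def eigDesc {m : ℕ} (A : Matrix (Fin m) (Fin m) ℝ) (hA : A.IsHermitian)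
    (i : ℕ) : ℝ :=
  if h : i < m then hA.eigenvalues (Tuple.sort hA.eigenvalues (Fin.rev ⟨i, h⟩)) else 0

theorem hermXXt {m n : ℕ} (X : Matrix (Fin m) (Fin n) ℝ) : (X * Xᵀ).IsHermitian := by
  simpa using Matrix.isHermitian_mul_conjTranspose_self X

theorem hermXtX {m n : ℕ} (X : Matrix (Fin m) (Fin n) ℝ) : (Xᵀ * X).IsHermitian := by
  simpa using Matrix.isHermitian_conjTranspose_mul_self X

/-- `i`-th largest (0-indexed) singular value of a real rectangular matrix. -/
noncomputable def singVal {m n : ℕ} (X : Matrix (Fin m) (Fin n) ℝ) (i : ℕ) : ℝ :=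
  Real.sqrt (eigDesc (Xᵀ * X) (hermXtX X) i)

/-- `i`-th largest (0-indexed) eigenvalue of the Gram matrix `X * Xᵀ`. -/
noncomputable def gramEig {m n : ℕ} (X : Matrix (Fin m) (Fin n) ℝ) (i : ℕ) : ℝ :=
  eigDesc (X * Xᵀ) (hermXXt X) i

/-- Convex combination `α • X₁ + (1 - α) • X₂`. -/
noncomputable def conv {m n : ℕ} (X₁ X₂ : Matrix (Fin m) (Fin n) ℝ) (α : ℝ) :
    Matrix (Fin m) (Fin n) ℝ :=
  α • X₁ + (1 - α) • X₂

/-!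
The core is Weyl's perturbation inequality `|λᵢ(A) - λᵢ(B)| ≤ ‖A - B‖` (spectral norm), proved by
the Courant–Fischer dimension count: the span of the top `i + 1` eigenvectors of `A` and the span
of the bottom `m - i` eigenvectors of `B` meet in a nonzero vector, on which the two Rayleigh
quotients are compared. For `G(α) = X(α) X(α)ᵀ` one has
`G(α) - G(β) = (X(α) - X(β)) X(α)ᵀ + X(β) (X(α) - X(β))ᵀ` with `X(α) - X(β) = (α - β) (X₁ - X₂)`,
and `‖X(α)‖ ≤ σ₁(X₁) + σ₁(X₂)` for `α ∈ [0, 1]`; hence `‖G(α) - G(αₖ)‖ ≤ (1/K) s · 2s` with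
`s = σ₁(X₁) + σ₁(X₂)`.
-/

open Module Submodule
open scoped RealInnerProductSpace

namespace OrthonormalBasis

variable {ι E : Type*} [Fintype ι] [NormedAddCommGroup E] [InnerProductSpace ℝ E]

lemma norm_sq_eq_sum_repr_sq (b : OrthonormalBasis ι ℝ E) (x : E) :
    ‖x‖ ^ 2 = ∑ j, b.repr x j ^ 2 := by
  rw [← b.repr.norm_map, EuclideanSpace.real_norm_sq_eq]

lemma repr_eq_zero_of_mem_span_image (b : OrthonormalBasis ι ℝ E) {s : Set ι} {x : E}
    (hx : x ∈ span ℝ (b '' s)) {j : ι} (hj : j ∉ s) : b.repr x j = 0 := by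
  rw [← b.coe_toBasis, Basis.mem_span_image] at hx
  simpa using Finsupp.notMem_support_iff.mp (fun h => hj (hx h))

lemma finrank_span_image (b : OrthonormalBasis ι ℝ E) (s : Finset ι) :
    finrank ℝ (span ℝ (b '' s)) = s.card := by
  have hb : LinearIndependent ℝ fun j : (s : Set ι) => b j :=
    b.orthonormal.linearIndependent.comp _ Subtype.val_injective
  rw [Set.image_eq_range, finrank_span_eq_card hb]
  simp

end OrthonormalBasis

namespace LinearMap.IsSymmetric

variable {E : Type*} [NormedAddCommGroup E] [InnerProductSpace ℝ E] [FiniteDimensional ℝ E]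
  {T S : E →ₗ[ℝ] E} {n : ℕ}

lemma inner_apply_self_eq_sum (hT : T.IsSymmetric) (hn : finrank ℝ E = n) (x : E) :
    ⟪T x, x⟫ = ∑ j, hT.eigenvalues hn j * (hT.eigenvectorBasis hn).repr x j ^ 2 := by
  rw [← (hT.eigenvectorBasis hn).repr.inner_map_map, PiLp.inner_apply]
  simp only [hT.eigenvectorBasis_apply_self_apply, RCLike.inner_apply, conj_trivial,
    RCLike.ofReal_real_eq_id, id_eq]
  exact Finset.sum_congr rfl fun j _ => by ring

lemma mul_norm_sq_le_inner_of_mem_span (hT : T.IsSymmetric) (hn : finrank ℝ E = n)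
    {s : Set (Fin n)} {t : ℝ} (hs : ∀ j ∈ s, t ≤ hT.eigenvalues hn j) {x : E}
    (hx : x ∈ span ℝ (hT.eigenvectorBasis hn '' s)) : t * ‖x‖ ^ 2 ≤ ⟪T x, x⟫ := by
  rw [hT.inner_apply_self_eq_sum hn, (hT.eigenvectorBasis hn).norm_sq_eq_sum_repr_sq,
    Finset.mul_sum]
  refine Finset.sum_le_sum fun j _ => ?_
  by_cases hj : j ∈ s
  · exact mul_le_mul_of_nonneg_right (hs j hj) (sq_nonneg _)
  · simp [(hT.eigenvectorBasis hn).repr_eq_zero_of_mem_span_image hx hj]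

lemma inner_le_mul_norm_sq_of_mem_span (hT : T.IsSymmetric) (hn : finrank ℝ E = n)
    {s : Set (Fin n)} {t : ℝ} (hs : ∀ j ∈ s, hT.eigenvalues hn j ≤ t) {x : E}
    (hx : x ∈ span ℝ (hT.eigenvectorBasis hn '' s)) : ⟪T x, x⟫ ≤ t * ‖x‖ ^ 2 := by
  rw [hT.inner_apply_self_eq_sum hn, (hT.eigenvectorBasis hn).norm_sq_eq_sum_repr_sq,
    Finset.mul_sum]
  refine Finset.sum_le_sum fun j _ => ?_
  by_cases hj : j ∈ s
  · exact mul_le_mul_of_nonneg_right (hs j hj) (sq_nonneg _)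
  · simp [(hT.eigenvectorBasis hn).repr_eq_zero_of_mem_span_image hx hj]

lemma inner_apply_self_le_eigenvalues_zero_mul (hT : T.IsSymmetric) (hn : finrank ℝ E = n)
    (h₀ : 0 < n) (x : E) : ⟪T x, x⟫ ≤ hT.eigenvalues hn ⟨0, h₀⟩ * ‖x‖ ^ 2 := by
  refine hT.inner_le_mul_norm_sq_of_mem_span hn (s := Set.univ)
    (fun j _ => hT.eigenvalues_antitone hn (Nat.zero_le j.val)) ?_
  rw [Set.image_univ, ← (hT.eigenvectorBasis hn).coe_toBasis, Basis.span_eq]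
  trivial

theorem eigenvalues_le_add_of_inner_le (hT : T.IsSymmetric) (hS : S.IsSymmetric)
    (hn : finrank ℝ E = n) {c : ℝ} (h : ∀ x, ⟪T x, x⟫ ≤ ⟪S x, x⟫ + c * ‖x‖ ^ 2) (i : Fin n) :
    hT.eigenvalues hn i ≤ hS.eigenvalues hn i + c := by
  set V := span ℝ (hT.eigenvectorBasis hn '' ↑(Finset.Iic i))
  set W := span ℝ (hS.eigenvectorBasis hn '' ↑(Finset.Ici i))
  have hVW : ¬ Disjoint V W := fun hVW => by
    have := finrank_add_finrank_le_of_disjoint hVW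
    rw [OrthonormalBasis.finrank_span_image, OrthonormalBasis.finrank_span_image, Fin.card_Iic,
      Fin.card_Ici, hn] at this
    omega
  obtain ⟨x, hxV, hxW, hx⟩ : ∃ x ∈ V, x ∈ W ∧ x ≠ 0 := by
    simpa [disjoint_def] using hVW
  have hTx := hT.mul_norm_sq_le_inner_of_mem_span hn
    (fun j hj => hT.eigenvalues_antitone hn (Finset.mem_Iic.mp hj)) hxV
  have hSx := hS.inner_le_mul_norm_sq_of_mem_span hn
    (fun j hj => hS.eigenvalues_antitone hn (Finset.mem_Ici.mp hj)) hxW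
  have hx2 : 0 < ‖x‖ ^ 2 := by positivity
  refine le_of_mul_le_mul_right ?_ hx2
  linarith [h x]

theorem abs_eigenvalues_sub_le (hT : T.IsSymmetric) (hS : S.IsSymmetric) (hn : finrank ℝ E = n)
    {c : ℝ} (h : ∀ x, |⟪T x, x⟫ - ⟪S x, x⟫| ≤ c * ‖x‖ ^ 2) (i : Fin n) :
    |hT.eigenvalues hn i - hS.eigenvalues hn i| ≤ c := by
  have hTS := hT.eigenvalues_le_add_of_inner_le hS hn (fun x => by linarith [abs_le.mp (h x)]) i
  have hST := hS.eigenvalues_le_add_of_inner_le hT hn (fun x => by linarith [abs_le.mp (h x)]) i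
  exact abs_sub_le_iff.mpr ⟨by linarith, by linarith⟩

end LinearMap.IsSymmetric

lemma Tuple.apply_sort_rev_of_antitone_comp {α : Type*} [LinearOrder α] {m N : ℕ} (h : m = N)
    {f : Fin N → α} (hf : Antitone f) (e : Fin m ≃ Fin N) (j : Fin m) :
    (f ∘ e) (Tuple.sort (f ∘ e) j.rev) = f (Fin.cast h j) := by
  set σ : Equiv.Perm (Fin m) := Fin.revPerm.trans ((finCongr h).trans e.symm)
  have hσ : Monotone ((f ∘ e) ∘ σ) := fun a b hab => by
    simpa [σ] using hf (show Fin.cast h b.rev ≤ Fin.cast h a.rev from Fin.rev_le_rev.mpr hab)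
  have := congrFun (Tuple.comp_sort_eq_comp_iff_monotone.mpr hσ) j.rev
  simpa [σ] using this.symm

/- `hA.eigenvalues` is the decreasingly sorted `hA.eigenvalues₀` reindexed along an arbitrary
equivalence; sorting it again undoes that reindexing. -/
lemma eigDesc_eq_eigenvalues₀ {m : ℕ} {A : Matrix (Fin m) (Fin m) ℝ} (hA : A.IsHermitian)
    {i : ℕ} (hi : i < m) : eigDesc A hA i = hA.eigenvalues₀ ⟨i, by simpa using hi⟩ := by
  rw [eigDesc, dif_pos hi]
  exact Tuple.apply_sort_rev_of_antitone_comp (Fintype.card_fin m).symm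
    hA.eigenvalues₀_antitone _ _

open scoped Matrix.Norms.L2Operator

namespace Matrix

lemma norm_toEuclideanLin_apply_le {m n : Type*} [Fintype m] [Fintype n] [DecidableEq n]
    (M : Matrix m n ℝ) (x : EuclideanSpace ℝ n) : ‖toEuclideanLin M x‖ ≤ ‖M‖ * ‖x‖ :=
  (toEuclideanLin.trans LinearMap.toContinuousLinearMap M).le_opNorm x

lemma l2_opNorm_transpose {m n : Type*} [Fintype m] [DecidableEq m] [Fintype n]
    [DecidableEq n] (M : Matrix m n ℝ) : ‖Mᵀ‖ = ‖M‖ := by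
  rw [← conjTranspose_eq_transpose_of_trivial, l2_opNorm_conjTranspose]

lemma inner_toEuclideanLin_transpose_mul_self {m n : Type*} [Fintype m] [DecidableEq m]
    [Fintype n] [DecidableEq n] (X : Matrix m n ℝ) (y : EuclideanSpace ℝ n) :
    ⟪toEuclideanLin (Xᵀ * X) y, y⟫ = ‖toEuclideanLin X y‖ ^ 2 := by
  have : toEuclideanLin (Xᵀ * X) y = (toEuclideanLin X).adjoint (toEuclideanLin X y) := by
    rw [← toEuclideanLin_conjTranspose_eq_adjoint, conjTranspose_eq_transpose_of_trivial]
    simp [toLpLin_apply, mulVec_mulVec]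
  rw [this, LinearMap.adjoint_inner_left, real_inner_self_eq_norm_sq]

lemma norm_mul_transpose_sub_le {m n : Type*} [Fintype m] [DecidableEq m] [Fintype n]
    [DecidableEq n] (Y Z : Matrix m n ℝ) :
    ‖Y * Yᵀ - Z * Zᵀ‖ ≤ ‖Y - Z‖ * (‖Y‖ + ‖Z‖) :=
  calc ‖Y * Yᵀ - Z * Zᵀ‖ = ‖(Y - Z) * Yᵀ + Z * (Y - Z)ᵀ‖ := by
        rw [transpose_sub, Matrix.mul_sub, Matrix.sub_mul]; congr 1; abel
    _ ≤ ‖Y - Z‖ * ‖Yᵀ‖ + ‖Z‖ * ‖(Y - Z)ᵀ‖ :=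
        (norm_add_le _ _).trans (add_le_add (l2_opNorm_mul _ _) (l2_opNorm_mul _ _))
    _ = ‖Y - Z‖ * (‖Y‖ + ‖Z‖) := by rw [l2_opNorm_transpose, l2_opNorm_transpose]; ring

end Matrix

theorem abs_eigDesc_sub_le_norm {m : ℕ} {A B : Matrix (Fin m) (Fin m) ℝ} (hA : A.IsHermitian)
    (hB : B.IsHermitian) (i : ℕ) : |eigDesc A hA i - eigDesc B hB i| ≤ ‖A - B‖ := by
  by_cases hi : i < m
  swap
  · simp [eigDesc, hi]
  rw [eigDesc_eq_eigenvalues₀ hA hi, eigDesc_eq_eigenvalues₀ hB hi]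
  refine LinearMap.IsSymmetric.abs_eigenvalues_sub_le _ _ _ (fun x => ?_) _
  rw [← inner_sub_left, ← LinearMap.sub_apply, ← map_sub]
  calc |⟪toEuclideanLin (A - B) x, x⟫| ≤ ‖toEuclideanLin (A - B) x‖ * ‖x‖ :=
        abs_real_inner_le_norm _ _
    _ ≤ ‖A - B‖ * ‖x‖ * ‖x‖ := by gcongr; exact norm_toEuclideanLin_apply_le _ _
    _ = ‖A - B‖ * ‖x‖ ^ 2 := by ring

lemma norm_le_singVal_zero {m n : ℕ} (X : Matrix (Fin m) (Fin n) ℝ) : ‖X‖ ≤ singVal X 0 := by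
  rcases Nat.eq_zero_or_pos n with rfl | hn
  · simp [Subsingleton.elim X 0, singVal]
  rw [l2_opNorm_def]
  refine ContinuousLinearMap.opNorm_le_bound _ (Real.sqrt_nonneg _) fun y => ?_
  have hXtX := (isSymmetric_toEuclideanLin_iff.mpr (hermXtX X))
    |>.inner_apply_self_le_eigenvalues_zero_mul finrank_euclideanSpace (by simpa using hn) y
  rw [inner_toEuclideanLin_transpose_mul_self] at hXtX
  rw [singVal, eigDesc_eq_eigenvalues₀ _ hn]
  calc ‖toEuclideanLin X y‖ = √(‖toEuclideanLin X y‖ ^ 2) := (Real.sqrt_sq (norm_nonneg _)).symm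
    _ ≤ √(_ * ‖y‖ ^ 2) := Real.sqrt_le_sqrt hXtX
    _ = _ := by rw [Real.sqrt_mul' _ (sq_nonneg _), Real.sqrt_sq (norm_nonneg _)]; rfl

lemma conv_sub_conv {m n : ℕ} (X₁ X₂ : Matrix (Fin m) (Fin n) ℝ) (α β : ℝ) :
    conv X₁ X₂ α - conv X₁ X₂ β = (α - β) • (X₁ - X₂) := by
  unfold conv; module

lemma norm_conv_le {m n : ℕ} (X₁ X₂ : Matrix (Fin m) (Fin n) ℝ) {α : ℝ} (h₀ : 0 ≤ α)
    (h₁ : α ≤ 1) : ‖conv X₁ X₂ α‖ ≤ ‖X₁‖ + ‖X₂‖ :=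
  calc ‖conv X₁ X₂ α‖ ≤ α * ‖X₁‖ + (1 - α) * ‖X₂‖ := by
        refine (norm_add_le _ _).trans_eq ?_
        rw [norm_smul, norm_smul, Real.norm_of_nonneg h₀, Real.norm_of_nonneg (sub_nonneg.mpr h₁)]
    _ ≤ ‖X₁‖ + ‖X₂‖ := by nlinarith [norm_nonneg X₁, norm_nonneg X₂]

theorem stmt6_general {m n : ℕ} (X₁ X₂ : Matrix (Fin m) (Fin n) ℝ) (K : ℕ)
    (k : ℕ) (hk : k < K) (α : ℝ)
    (hα : α ∈ Set.Icc ((k : ℝ) / K) (((k : ℝ) + 1) / K)) (i : ℕ) :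
    |gramEig (conv X₁ X₂ α) i - gramEig (conv X₁ X₂ ((k : ℝ) / K)) i| ≤
      (2 / K) * (singVal X₁ 0 + singVal X₂ 0) ^ 2 := by
  set β : ℝ := k / K
  set s := ‖X₁‖ + ‖X₂‖
  have hK : (0 : ℝ) < K := by exact_mod_cast Nat.zero_lt_of_lt hk
  have hkK : (k : ℝ) + 1 ≤ K := by exact_mod_cast hk
  have hβ₀ : 0 ≤ β := by positivity
  have hβ₁ : β ≤ 1 := (div_le_one hK).mpr (by linarith)
  have hα₁ : α ≤ 1 := hα.2.trans ((div_le_one hK).mpr hkK)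
  have hαβ : |α - β| ≤ 1 / K := by
    rw [abs_of_nonneg (sub_nonneg.mpr hα.1)]
    linarith [hα.2, show ((k : ℝ) + 1) / K = β + 1 / K by ring]
  have hs : s ≤ singVal X₁ 0 + singVal X₂ 0 :=
    add_le_add (norm_le_singVal_zero X₁) (norm_le_singVal_zero X₂)
  calc _ ≤ ‖conv X₁ X₂ α * (conv X₁ X₂ α)ᵀ - conv X₁ X₂ β * (conv X₁ X₂ β)ᵀ‖ :=
        abs_eigDesc_sub_le_norm _ _ i
    _ ≤ ‖conv X₁ X₂ α - conv X₁ X₂ β‖ * (‖conv X₁ X₂ α‖ + ‖conv X₁ X₂ β‖) :=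
        norm_mul_transpose_sub_le _ _
    _ ≤ (1 / K * s) * (s + s) := by
        rw [conv_sub_conv, norm_smul, Real.norm_eq_abs]
        gcongr
        · exact norm_sub_le _ _
        · exact norm_conv_le X₁ X₂ (hβ₀.trans hα.1) hα₁
        · exact norm_conv_le X₁ X₂ hβ₀ hβ₁
    _ = 2 / K * s ^ 2 := by ring
    _ ≤ _ := by gcongr

theorem stmt6 {m n : ℕ} (X₁ X₂ : Matrix (Fin m) (Fin n) ℝ) (K : ℕ) (hK : 0 < K)
    (k : ℕ) (hk : k < K) (α : ℝ)
    (hα : α ∈ Set.Icc ((k : ℝ) / K) (((k : ℝ) + 1) / K)) (i : ℕ) (hi : i < m) :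
    |gramEig (conv X₁ X₂ α) i - gramEig (conv X₁ X₂ ((k : ℝ) / K)) i| ≤
      (2 / K) * (singVal X₁ 0 + singVal X₂ 0) ^ 2 :=
  stmt6_general X₁ X₂ K k hk α hα i
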